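/- Let g_t (for t ∈ ℂ, |t| < 1, t ≠ 0) be the 8-dimensional Lie algebra with complex structure whose (1,0)-form basis φ¹,...,φ⁴ satisfies dφ¹ = dφ² = 0, dφ³ = φ¹∧φ̄¹, dφ⁴ = (1/(1-|t|²))·φ¹∧φ² - (t/(1-|t|²))·φ¹∧φ̄². Then every closed (2,0)-form Ω on g_t satisfies Ω ∧ Ω = 0; in particular g_t admits no invariant complex symplectic form. -/

import Mathlib

/-
STATEMENT 4: For the deformed 8-dimensional nilpotent Lie algebra g_t (t ∈ ℂ, 0 < |t| < 1)
with (1,0)-forms satisfying dφ¹ = dφ² = 0, dφ³ = φ¹∧φ̄¹,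
dφ⁴ = (1/(1-|t|²)) φ¹∧φ² - (t/(1-|t|²)) φ¹∧φ̄², every closed (2,0)-form Ω satisfies
Ω∧Ω = 0; in particular g_t admits no invariant complex symplectic form.

Model: exterior algebra over ℂ on generators gen 0..3 = φ¹..φ⁴, gen 4..7 = φ̄¹..φ̄⁴;
d determined by structure equations (and conjugates) and the Leibniz rule; a generic
invariant (2,0)-form is Ω = α φ¹² + β φ¹³ + γ φ¹⁴ + τ φ²³ + θ φ²⁴ + ζ φ³⁴.
-/

noncomputable section

abbrev E := ExteriorAlgebra ℂ (Fin 8 → ℂ)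

def gen (i : Fin 8) : E := ExteriorAlgebra.ι ℂ (Pi.single i 1)

def dgen (t : ℂ) : Fin 8 → E :=
  ![0, 0, gen 0 * gen 4,
    ((1 - (Complex.normSq t : ℂ))⁻¹) • (gen 0 * gen 1)
      - (t * (1 - (Complex.normSq t : ℂ))⁻¹) • (gen 0 * gen 5),
    0, 0, gen 4 * gen 0,
    ((1 - (Complex.normSq t : ℂ))⁻¹) • (gen 4 * gen 5)
      - ((starRingEnd ℂ) t * (1 - (Complex.normSq t : ℂ))⁻¹) • (gen 4 * gen 1)]

def d2 (t : ℂ) (i j : Fin 8) : E := dgen t i * gen j - gen i * dgen t j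

/-- generic invariant (2,0)-form. -/
def Om (a b c d e f : ℂ) : E :=
  a • (gen 0 * gen 1) + b • (gen 0 * gen 2) + c • (gen 0 * gen 3) +
  d • (gen 1 * gen 2) + e • (gen 1 * gen 3) + f • (gen 2 * gen 3)

/-- its differential, by linearity and the Leibniz rule. -/
def dOm (t a b c d e f : ℂ) : E :=
  a • d2 t 0 1 + b • d2 t 0 2 + c • d2 t 0 3 +
  d • d2 t 1 2 + e • d2 t 1 3 + f • d2 t 2 3

/-!
Closedness of Ω is read off three coordinates of dΩ in the monomial basis of the exterior
algebra: the coefficients of φ¹∧φ²∧φ̄¹, φ¹∧φ²∧φ̄² and φ¹∧φ⁴∧φ̄¹ are τ, -θ·t/(1-|t|²) and -ζ.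
Since t ≠ 0 and |t| < 1, a closed Ω has τ = θ = ζ = 0, so Ω = φ¹ ∧ (αφ² + βφ³ + γφ⁴) is
decomposable and Ω ∧ Ω = 0.
-/

theorem Module.Basis.exteriorAlgebra_image_eq_ιMulti {R M I : Type*} [CommRing R]
    [AddCommGroup M] [Module R M] [LinearOrder I] (b : Module.Basis I R M) {k : ℕ}
    {v : Fin k → I} (hv : StrictMono v) :
    b.ExteriorAlgebra (Finset.univ.image v) = ExteriorAlgebra.ιMulti R k (b ∘ v) := by
  have hcard : (Finset.univ.image v).card = k := by
    rw [Finset.card_image_of_injective _ hv.injective, Finset.card_univ, Fintype.card_fin]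
  rw [ExteriorAlgebra.basis_apply_ofCard b hcard, ExteriorAlgebra.ιMulti_family,
    Set.powersetCard.ofFinEmbEquiv_symm_apply]
  congr 2
  exact (Finset.orderEmbOfFin_unique _ (fun x => Finset.mem_image_of_mem v (Finset.mem_univ x))
    hv).symm

theorem ExteriorAlgebra.ι_mul_ι_mul_self {R M : Type*} [CommRing R] [AddCommGroup M]
    [Module R M] (x y : M) : ι R x * ι R y * (ι R x * ι R y) = 0 := by
  rw [mul_assoc, ← mul_assoc (ι R y), eq_neg_of_add_eq_zero_right (ι_add_mul_swap x y),
    neg_mul, mul_neg, ← mul_assoc, ← mul_assoc, ι_sq_zero, zero_mul, zero_mul, neg_zero]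

lemma one_sub_normSq_ne_zero {t : ℂ} (ht : ‖t‖ < 1) : 1 - (Complex.normSq t : ℂ) ≠ 0 := by
  have hlt : Complex.normSq t < 1 := by
    rw [Complex.normSq_eq_norm_sq]
    nlinarith [norm_nonneg t]
  exact_mod_cast (sub_pos.mpr hlt).ne'

def monomialBasis : Module.Basis (Finset (Fin 8)) ℂ E := (Pi.basisFun ℂ (Fin 8)).ExteriorAlgebra

lemma gen_mul_self (i : Fin 8) : gen i * gen i = 0 := ExteriorAlgebra.ι_sq_zero _

lemma gen_anticomm (i j : Fin 8) : gen j * gen i = -(gen i * gen j) :=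
  eq_neg_of_add_eq_zero_right (ExteriorAlgebra.ι_add_mul_swap _ _)

lemma gen_left_anticomm (i j k : Fin 8) :
    gen j * (gen i * gen k) = -(gen i * (gen j * gen k)) := by
  rw [← mul_assoc, gen_anticomm i j, neg_mul, mul_assoc]

lemma gen_mul_gen_mul_gen {a b c : Fin 8} (hab : a < b) (hbc : b < c) :
    gen a * (gen b * gen c) = monomialBasis {a, b, c} := by
  have hmono : StrictMono ![a, b, c] := by
    rw [Fin.strictMono_iff_lt_succ]
    intro i
    fin_cases i <;> simpa
  have himage : Finset.univ.image ![a, b, c] = {a, b, c} := by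
    ext x
    simp [Fin.exists_fin_succ, eq_comm]
  rw [monomialBasis, ← himage, Module.Basis.exteriorAlgebra_image_eq_ιMulti _ hmono]
  simp [ExteriorAlgebra.ιMulti_apply, gen, Matrix.vecTail]

lemma d2_zero_one (t : ℂ) : d2 t 0 1 = 0 := by
  simp [d2, dgen]

lemma d2_zero_two (t : ℂ) : d2 t 0 2 = 0 := by
  simp [d2, dgen, ← mul_assoc, gen_mul_self]

lemma d2_zero_three (t : ℂ) : d2 t 0 3 = 0 := by
  simp [d2, dgen, mul_sub, ← mul_assoc, gen_mul_self]

lemma d2_one_two (t : ℂ) : d2 t 1 2 = gen 0 * (gen 1 * gen 4) := by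
  simp [d2, dgen, gen_left_anticomm 0 1]

lemma d2_one_three (t : ℂ) :
    d2 t 1 3 = -((t * (1 - (Complex.normSq t : ℂ))⁻¹) • (gen 0 * (gen 1 * gen 5))) := by
  simp [d2, dgen, mul_sub, gen_left_anticomm 0 1, gen_mul_self]

lemma d2_two_three (t : ℂ) :
    d2 t 2 3 = -(gen 0 * (gen 3 * gen 4))
      - ((1 - (Complex.normSq t : ℂ))⁻¹) • (gen 0 * (gen 1 * gen 2))
      - (t * (1 - (Complex.normSq t : ℂ))⁻¹) • (gen 0 * (gen 2 * gen 5)) := by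
  simp only [d2, dgen, Matrix.cons_val_two, Matrix.cons_val_three, Matrix.tail_cons,
    Matrix.head_cons, mul_sub, mul_smul_comm, mul_assoc, gen_anticomm 3 4, gen_anticomm 1 2,
    gen_left_anticomm 0 2, mul_neg, neg_neg, smul_neg]
  module

lemma dOm_eq (t α β γ τ θ ζ : ℂ) :
    dOm t α β γ τ θ ζ =
      τ • monomialBasis {0, 1, 4}
      - (θ * (t * (1 - (Complex.normSq t : ℂ))⁻¹)) • monomialBasis {0, 1, 5}
      - (ζ * (1 - (Complex.normSq t : ℂ))⁻¹) • monomialBasis {0, 1, 2}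
      - ζ • monomialBasis {0, 3, 4}
      - (ζ * (t * (1 - (Complex.normSq t : ℂ))⁻¹)) • monomialBasis {0, 2, 5} := by
  simp only [dOm, d2_zero_one, d2_zero_two, d2_zero_three, d2_one_two, d2_one_three,
    d2_two_three]
  rw [gen_mul_gen_mul_gen (a := 0) (b := 1) (c := 4) (by decide) (by decide),
    gen_mul_gen_mul_gen (a := 0) (b := 1) (c := 5) (by decide) (by decide),
    gen_mul_gen_mul_gen (a := 0) (b := 1) (c := 2) (by decide) (by decide),
    gen_mul_gen_mul_gen (a := 0) (b := 3) (c := 4) (by decide) (by decide),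
    gen_mul_gen_mul_gen (a := 0) (b := 2) (c := 5) (by decide) (by decide)]
  module

lemma dOm_eq_zero_iff {t : ℂ} (ht0 : t ≠ 0) (ht : ‖t‖ < 1) (α β γ τ θ ζ : ℂ) :
    dOm t α β γ τ θ ζ = 0 ↔ τ = 0 ∧ θ = 0 ∧ ζ = 0 := by
  constructor
  · intro h
    rw [dOm_eq] at h
    have coeff (s : Finset (Fin 8)) := congrArg (fun x => monomialBasis.repr x s) h
    have h014 := coeff {0, 1, 4}
    have h015 := coeff {0, 1, 5}
    have h034 := coeff {0, 3, 4}
    simp +decide [ht0, one_sub_normSq_ne_zero ht] at h014 h015 h034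
    exact ⟨h014, h015, h034⟩
  · rintro ⟨rfl, rfl, rfl⟩
    simp [dOm_eq]

lemma Om_eq_gen_mul_ι (α β γ : ℂ) :
    Om α β γ 0 0 0 =
      gen 0 * ExteriorAlgebra.ι ℂ (α • Pi.single 1 1 + β • Pi.single 2 1 + γ • Pi.single 3 1) := by
  simp only [Om, gen, map_add, map_smul, mul_add, mul_smul_comm, zero_smul, add_zero]

lemma Om_mul_self_of_dOm_eq_zero {t : ℂ} (ht0 : t ≠ 0) (ht : ‖t‖ < 1) {α β γ τ θ ζ : ℂ}
    (h : dOm t α β γ τ θ ζ = 0) : Om α β γ τ θ ζ * Om α β γ τ θ ζ = 0 := by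
  obtain ⟨rfl, rfl, rfl⟩ := (dOm_eq_zero_iff ht0 ht α β γ τ θ ζ).mp h
  rw [Om_eq_gen_mul_ι]
  exact ExteriorAlgebra.ι_mul_ι_mul_self _ _

theorem stmt4 (t : ℂ) (ht0 : t ≠ 0) (ht : ‖t‖ < 1) :
    (∀ α β γ τ θ ζ : ℂ, dOm t α β γ τ θ ζ = 0 →
        Om α β γ τ θ ζ * Om α β γ τ θ ζ = 0) ∧
    ¬ ∃ α β γ τ θ ζ : ℂ, dOm t α β γ τ θ ζ = 0 ∧
        Om α β γ τ θ ζ * Om α β γ τ θ ζ ≠ 0 :=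
  ⟨fun _ _ _ _ _ _ h => Om_mul_self_of_dOm_eq_zero ht0 ht h,
    fun ⟨_, _, _, _, _, _, h, hne⟩ => hne (Om_mul_self_of_dOm_eq_zero ht0 ht h)⟩

end
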